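/- arXiv:2508.05816 — 7 statements merged into one kernel-verified Lean document; each statement's English description precedes it below -/
import Mathlib

section
/- Let f : S^m → S, let t be a type in {1,...,m}^N, and let τ ∈ S_m be a permutation. Then v ↦ τ^{-1}(v) gives a bijection from the set of vectors fixed by f_t to the set of vectors fixed by (f∘τ)_{τt}, where τ acts on vectors by τ(v_1,...,v_m) = (v_{τ(1)},...,v_{τ(m)}) and on types entrywise. -/
/-- Replacement of the `j`-th entry of `v` by `f v`. -/
def rep {S : Type*} {m : ℕ} (f : (Fin m → S) → S) (j : Fin m) (v : Fin m → S) : Fin m → S :=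
  Function.update v j (f v)

/-- The iterating function `f_t` for a type `t`, applying the replacements in order. -/
def iterRep {S : Type*} {m : ℕ} (f : (Fin m → S) → S) : List (Fin m) → (Fin m → S) → (Fin m → S)
  | [], v => v
  | j :: t, v => iterRep f t (rep f j v)

/-- The action of `τ ∈ S_m` on vectors: `τ(v)_i = v_{τ(i)}`. -/
def permVec {S : Type*} {m : ℕ} (τ : Equiv.Perm (Fin m)) (v : Fin m → S) : Fin m → S :=
  fun i => v (τ i)

/-! Relabelling coordinates by `τ` conjugates `f_t` into `(f ∘ τ)_{τt}`: replacing entry `j` and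
then relabelling is the same as relabelling and then replacing entry `τ j`. A conjugating
bijection carries fixed points to fixed points, and its inverse carries them back. -/

section

variable {S : Type*} {m : ℕ}

lemma permVec_permVec_inv (τ : Equiv.Perm (Fin m)) (v : Fin m → S) :
    permVec τ (permVec τ⁻¹ v) = v := by
  funext i
  simp [permVec]

lemma permVec_inv_permVec (τ : Equiv.Perm (Fin m)) (v : Fin m → S) :
    permVec τ⁻¹ (permVec τ v) = v := by
  funext i
  simp [permVec]

lemma permVec_inv_update (τ : Equiv.Perm (Fin m)) (v : Fin m → S) (j : Fin m) (a : S) :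
    permVec τ⁻¹ (Function.update v j a) = Function.update (permVec τ⁻¹ v) (τ j) a :=
  Function.update_comp_equiv v τ⁻¹ j a

lemma rep_permVec_inv (f : (Fin m → S) → S) (τ : Equiv.Perm (Fin m)) (j : Fin m)
    (v : Fin m → S) :
    rep (fun w => f (permVec τ w)) (τ j) (permVec τ⁻¹ v) = permVec τ⁻¹ (rep f j v) := by
  rw [rep, rep, permVec_permVec_inv, permVec_inv_update]

theorem iterRep_semiconj_permVec_inv (f : (Fin m → S) → S) (τ : Equiv.Perm (Fin m))
    (t : List (Fin m)) :
    Function.Semiconj (permVec τ⁻¹) (iterRep f t)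
      (iterRep (fun w => f (permVec τ w)) (t.map τ)) := by
  induction t with
  | nil => exact fun _ => rfl
  | cons j t ih =>
    intro v
    rw [List.map_cons, iterRep, iterRep, ih, rep_permVec_inv]

end

/-- `v ↦ τ⁻¹(v)` is a bijection from the fixed vectors of `f_t`
to the fixed vectors of `(f∘τ)_{τt}`, with inverse `w ↦ τ(w)`. -/
theorem perm_bijection {S : Type*} {m : ℕ} (f : (Fin m → S) → S)
    (τ : Equiv.Perm (Fin m)) (t : List (Fin m)) :
    (∀ v : Fin m → S, iterRep f t v = v →
      iterRep (fun w => f (permVec τ w)) (t.map ⇑τ) (permVec τ⁻¹ v) = permVec τ⁻¹ v) ∧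
    (∀ w : Fin m → S, iterRep (fun w => f (permVec τ w)) (t.map ⇑τ) w = w →
      iterRep f t (permVec τ w) = permVec τ w) := by
  have hconj := iterRep_semiconj_permVec_inv f τ t
  have hconj_inv : Function.Semiconj (permVec τ) _ _ :=
    hconj.inverse_left (permVec_permVec_inv τ) (permVec_inv_permVec τ)
  exact ⟨fun _ hv => hconj.mapsTo_fixedPoints hv, fun _ hw => hconj_inv.mapsTo_fixedPoints hw⟩
end

section
/- Let C, D be nonzero integers of opposite sign. There are infinitely many integer solutions (x,y) to Cx² − x + Dy² = 0 if and only if |CD| is not a perfect square. -/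
private lemma sq_sub_sq_eq_one {a b : ℤ} (h : a ^ 2 - b ^ 2 = 1) : b = 0 := by
  have h' : (a - b) * (a + b) = 1 := by linear_combination h
  rcases Int.mul_eq_one_iff_eq_one_or_neg_one.mp h' with ⟨h1, h2⟩ | ⟨h1, h2⟩ <;> omega

/-- For `C, D` nonzero integers of opposite sign, there are infinitely many integer
solutions of `Cx² − x + Dy² = 0` if and only if `|CD|` is not a perfect square. -/
theorem indefinite_type_L_infinite_iff (C D : ℤ) (hC : C ≠ 0) (hD : D ≠ 0)
    (hsign : C * D < 0) :
    {p : ℤ × ℤ | C * p.1 ^ 2 - p.1 + D * p.2 ^ 2 = 0}.Infinite ↔ ¬ IsSquare |C * D| := by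
  constructor
  · -- if |CD| is a square, the solution set is finite
    intro hinf
    rintro ⟨k, hk⟩
    apply Set.not_infinite.mpr _ hinf
    apply Set.Finite.subset (Set.finite_Icc ((-1 : ℤ), -1) (1, 1))
    rintro ⟨x, y⟩ hxy
    simp only [Set.mem_setOf_eq] at hxy
    have hCD : |C * D| = -(C * D) := abs_of_neg hsign
    have hk0 : k ≠ 0 := by
      intro h; rw [h, mul_zero] at hk; omega
    have hkk : k * k = -(C * D) := by rw [← hk, hCD]
    have key : (2 * C * x - 1) ^ 2 - (2 * k * y) ^ 2 = 1 := by
      linear_combination 4 * C * hxy - 4 * y ^ 2 * hkk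
    have hy : 2 * k * y = 0 := sq_sub_sq_eq_one key
    have hy0 : y = 0 := by
      rcases mul_eq_zero.mp hy with h | h
      · omega
      · exact h
    subst hy0
    have hx : x * (C * x - 1) = 0 := by linear_combination hxy
    have hxb : -1 ≤ x ∧ x ≤ 1 := by
      rcases mul_eq_zero.mp hx with h | h
      · omega
      · have : C * x = 1 := by omega
        rcases Int.mul_eq_one_iff_eq_one_or_neg_one.mp this with ⟨_, h2⟩ | ⟨_, h2⟩ <;> omega
    simp [Prod.le_def, hxb.1, hxb.2]
  · -- if |CD| is not a square, construct infinitely many solutions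
    intro hns
    set d : ℤ := -(4 * (C * D)) with hd
    have hd0 : 0 < d := by simp only [hd]; linarith
    have hdns : ¬ IsSquare d := by
      rintro ⟨m, hm⟩
      apply hns
      have h4 : (4:ℤ) ∣ m * m := ⟨-(C * D), by rw [← hm, hd]; ring⟩
      have h2 : (2:ℤ) ∣ m :=
        ((Int.prime_two).dvd_or_dvd (dvd_trans (by norm_num) h4)).elim id id
      obtain ⟨t, rfl⟩ := h2
      refine ⟨t, ?_⟩
      rw [abs_of_neg hsign]
      have : -(4 * (C * D)) = 2 * t * (2 * t) := hm
      nlinarith [this]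
    obtain ⟨a, ha⟩ := Pell.IsFundamental.exists_of_not_isSquare hd0 hdns
    set f : ℕ → ℤ × ℤ := fun n => (4 * D * ((a ^ (n : ℤ)).y) ^ 2, (a ^ (2 * (n : ℤ))).y)
      with hf
    apply Set.infinite_of_injective_forall_mem (f := f)
    · intro m n hmn
      have h2 : (a ^ (2 * (m : ℤ))).y = (a ^ (2 * (n : ℤ))).y := congrArg Prod.snd hmn
      have := ha.y_strictMono.injective h2
      omega
    · intro n
      simp only [Set.mem_setOf_eq, hf]
      set u := (a ^ (n : ℤ)).x with hu
      set v := (a ^ (n : ℤ)).y with hv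
      have hprop : u ^ 2 - d * v ^ 2 = 1 := (a ^ (n : ℤ)).prop
      have hY : (a ^ (2 * (n : ℤ))).y = 2 * u * v := by
        rw [two_mul, zpow_add, Pell.Solution₁.y_mul, ← hu, ← hv]; ring
      rw [hY]
      have hu2 : u ^ 2 = 1 - 4 * (C * D) * v ^ 2 := by rw [hd] at hprop; linarith
      linear_combination 4 * D * v ^ 2 * hu2
end

section
/- Let C, D be nonzero rationals and f(x,y) = Cx² + Dy². Then f has a rational periodic vector of type (L,L) if and only if there exist rational numbers m ≠ 0 and n such that CD = −(n² + 3)/(4m²). -/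
/-! Completing the square, `4 (C²x² + Cx + CDy² + 1) = (2Cx + 1)² + 3 + 4CDy²`, so the equation says
`-4CD y² = n² + 3` with `n = 2Cx + 1`. Since `n² + 3 > 0`, a solution has `y ≠ 0` and gives `m = y`;
conversely `x = (n - 1)/(2C)`, `y = m` solves it. -/

theorem four_mul_periodic_eq {K : Type*} [CommRing K] (C D x y : K) :
    4 * (C ^ 2 * x ^ 2 + C * x + C * D * y ^ 2 + 1) = (2 * C * x + 1) ^ 2 + 3 + 4 * C * D * y ^ 2 := by
  ring

theorem periodic_eq_iff_sq_add_three {K : Type*} [Field K] [NeZero (2 : K)] (C D x y : K) :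
    C ^ 2 * x ^ 2 + C * x + C * D * y ^ 2 + 1 = 0 ↔ (2 * C * x + 1) ^ 2 + 3 = -4 * C * D * y ^ 2 := by
  have h4 : (4 : K) ≠ 0 := by simpa [show (4 : K) = 2 * 2 by norm_num] using two_ne_zero
  rw [← mul_eq_zero_iff_left h4, four_mul_periodic_eq]
  constructor <;> intro h <;> linear_combination h

theorem type_LL_criterion_general (C D : ℚ) (hC : C ≠ 0) :
    (∃ x y : ℚ, C ^ 2 * x ^ 2 + C * x + C * D * y ^ 2 + 1 = 0) ↔
      ∃ m n : ℚ, m ≠ 0 ∧ C * D = -(n ^ 2 + 3) / (4 * m ^ 2) := by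
  simp_rw [periodic_eq_iff_sq_add_three]
  constructor
  · rintro ⟨x, y, h⟩
    have hy : y ≠ 0 := by
      rintro rfl
      nlinarith [sq_nonneg (2 * C * x + 1)]
    refine ⟨y, 2 * C * x + 1, hy, ?_⟩
    rw [eq_div_iff (by positivity), h]
    ring
  · rintro ⟨m, n, hm, h⟩
    refine ⟨(n - 1) / (2 * C), m, ?_⟩
    rw [eq_div_iff (by positivity)] at h
    rw [show 2 * C * ((n - 1) / (2 * C)) + 1 = n by field_simp; ring]
    linear_combination h

/-- `f = Cx² + Dy²` has a rational periodic vector of type `(L,L)` if and only if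
`CD = −(n² + 3)/(4m²)` for some rationals `m ≠ 0`, `n`. -/
theorem type_LL_criterion (C D : ℚ) (hC : C ≠ 0) (hD : D ≠ 0) :
    (∃ x y : ℚ, C ^ 2 * x ^ 2 + C * x + C * D * y ^ 2 + 1 = 0) ↔
      ∃ m n : ℚ, m ≠ 0 ∧ C * D = -(n ^ 2 + 3) / (4 * m ^ 2) :=
  type_LL_criterion_general C D hC
end

section
/- Let C, D be nonzero rationals and f(x,y) = Cx² + Dy². Then f has a rational periodic vector of type (L,L,L) if and only if there exist rational numbers τ ∉ {−1, 0} and n ≠ 0 such that CD = −(τ⁶ + 2τ⁵ + 4τ⁴ + 8τ³ + 9τ² + 4τ + 1)/(4n²τ²(τ+1)²). -/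
/-!
Multiplication by `C` conjugates `u ↦ Cu² + DY²` to `u ↦ u² + k` with `k = CDY²`. If
`x ↦ y ↦ z ↦ x` is a 3-cycle of `u ↦ u² + k`, then eliminating `z` shows that `τ = x + y`
determines `x` rationally, and this forces `4τ²(τ+1)²k = -P(τ)` (Walde–Russo). Conversely every
`τ ∉ {0, -1}` yields an explicit cycle, which is not a fixed point because `τ² + τ + 1 > 0`.
Since `P > 0`, such a `k` is never `0`, so `Y ≠ 0` can play the role of `n`.
-/

open Function

theorem Function.Semiconj.exists_iterate_eq_self_and_ne_iff {α β : Type*} {h : α → β}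
    {f : α → α} {g : β → β} (hs : Semiconj h f g) (hh : Bijective h) (n : ℕ) :
    (∃ x, f^[n] x = x ∧ f x ≠ x) ↔ ∃ y, g^[n] y = y ∧ g y ≠ y := by
  have key : ∀ x, (f^[n] x = x ∧ f x ≠ x) ↔ (g^[n] (h x) = h x ∧ g (h x) ≠ h x) := fun x => by
    rw [← (hs.iterate_right n).eq x, ← hs.eq x, hh.injective.eq_iff, hh.injective.ne_iff]
  exact (exists_congr key).trans (hh.surjective.exists (p := fun y => g^[n] y = y ∧ g y ≠ y)).symm

section WaldeRusso

variable {R K : Type*}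

/-- The numerator `P` in Walde–Russo's parametrization `k = -P(τ) / (4τ²(τ+1)²)`. -/
def waldeRussoPoly [CommRing R] (τ : R) : R :=
  τ ^ 6 + 2 * τ ^ 5 + 4 * τ ^ 4 + 8 * τ ^ 3 + 9 * τ ^ 2 + 4 * τ + 1

theorem waldeRussoPoly_pos [CommRing R] [LinearOrder R] [IsStrictOrderedRing R] (τ : R) :
    0 < waldeRussoPoly τ := by
  unfold waldeRussoPoly
  nlinarith [sq_nonneg (τ ^ 3 + τ ^ 2 + 2 * τ), sq_nonneg (τ ^ 3 + τ ^ 2 + τ + 1),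
    sq_nonneg (τ ^ 2 + 2 * τ + 1), sq_nonneg (2 * τ + 1), sq_nonneg τ, sq_nonneg (τ ^ 2 + τ)]

theorem waldeRusso_of_three_cycle [CommRing R] [IsDomain R] {k x y z : R}
    (hxy : x ^ 2 + k = y) (hyz : y ^ 2 + k = z) (hzx : z ^ 2 + k = x) (hne : x ≠ y) :
    x + y ≠ 0 ∧ x + y + 1 ≠ 0 ∧
      4 * (x + y) ^ 2 * (x + y + 1) ^ 2 * k = -waldeRussoPoly (x + y) := by
  have hxz : x ≠ z := by rintro rfl; exact hne (hzx.symm.trans hxy)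
  have hyz' : y ≠ z := by rintro rfl; exact hne (hzx.symm.trans hyz)
  have hsub : x - y ≠ 0 := sub_ne_zero.mpr hne
  -- `(y - x)(x + y) = z - y`, so `x + y ∈ {0, -1}` would collapse the cycle
  have hdiff : (y - x) * (x + y) = z - y := by linear_combination hyz - hxy
  refine ⟨fun h => hyz' ?_, fun h => hxz ?_, ?_⟩
  · linear_combination hdiff + (x - y) * h
  · linear_combination hdiff + (x - y) * h
  set a := x + y
  have h₁ : (y + z) * a + (1 + a) = 0 := (mul_eq_zero.mp (show (x - y) * _ = 0 by
    linear_combination (y + z + 1) * hxy - (y + z) * hyz - hzx)).resolve_left hsub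
  have h₂ : (z + x) * (1 + a) + 1 = 0 := (mul_eq_zero.mp (show (x - y) * _ = 0 by
    linear_combination (z + x + 1) * hxy - (z + x) * hyz - hzx)).resolve_left hsub
  have hx : 2 * x * a * (1 + a) = a ^ 3 + 2 * a ^ 2 + a + 1 := by
    linear_combination (-(1 + a)) * h₁ + a * h₂
  unfold waldeRussoPoly
  linear_combination (4 * a ^ 2 * (a + 1) ^ 2) * hxy
    - (2 * a * (1 + a) + (a ^ 3 + 2 * a ^ 2 + a + 1) + 2 * x * a * (1 + a)) * hx

theorem three_cycle_of_waldeRusso [Field K] [NeZero (2 : K)] {k τ : K} (hτ : τ ≠ 0)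
    (hτ₁ : τ + 1 ≠ 0) (hk : 4 * τ ^ 2 * (τ + 1) ^ 2 * k = -waldeRussoPoly τ) :
    ∃ x y z : K, x ^ 2 + k = y ∧ y ^ 2 + k = z ∧ z ^ 2 + k = x ∧
      τ * (τ + 1) * (x - y) = τ ^ 2 + τ + 1 := by
  unfold waldeRussoPoly at hk
  -- the cycle with `x + y = τ` produced by `waldeRusso_of_three_cycle`
  refine ⟨(τ ^ 3 + 2 * τ ^ 2 + τ + 1) / (2 * τ * (τ + 1)), (τ ^ 3 - τ - 1) / (2 * τ * (τ + 1)),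
    -(τ ^ 3 + 2 * τ ^ 2 + 3 * τ + 1) / (2 * τ * (τ + 1)), ?_, ?_, ?_, ?_⟩
  all_goals field_simp
  · linear_combination hk
  · linear_combination hk
  · linear_combination hk
  · ring

theorem exists_iterate_three_sq_add_iff [Field K] [LinearOrder K] [IsStrictOrderedRing K]
    (k : K) :
    (∃ x, (fun u => u ^ 2 + k)^[3] x = x ∧ (fun u => u ^ 2 + k) x ≠ x) ↔
      ∃ τ : K, τ ≠ 0 ∧ τ + 1 ≠ 0 ∧ 4 * τ ^ 2 * (τ + 1) ^ 2 * k = -waldeRussoPoly τ := by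
  simp only [iterate_succ, iterate_zero, comp_apply, id_eq]
  constructor
  · rintro ⟨x, hx, hne⟩
    exact ⟨_, waldeRusso_of_three_cycle rfl rfl hx hne.symm⟩
  · rintro ⟨τ, hτ, hτ₁, hk⟩
    obtain ⟨x, y, z, hxy, hyz, hzx, hdiff⟩ := three_cycle_of_waldeRusso hτ hτ₁ hk
    refine ⟨x, by rw [hxy, hyz, hzx], fun h => ?_⟩
    have : τ ^ 2 + τ + 1 = 0 := by rw [← hdiff, ← hxy, h, sub_self, mul_zero]
    nlinarith [sq_nonneg (2 * τ + 1)]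

end WaldeRusso

theorem type_LLL_criterion_general (C D : ℚ) (hC : C ≠ 0) :
    (∃ x Y : ℚ,
        (fun u : ℚ => C * u ^ 2 + D * Y ^ 2)^[3] x = x ∧
        (fun u : ℚ => C * u ^ 2 + D * Y ^ 2) x ≠ x) ↔
      ∃ τ n : ℚ, τ ≠ -1 ∧ τ ≠ 0 ∧ n ≠ 0 ∧
        C * D = -(τ ^ 6 + 2 * τ ^ 5 + 4 * τ ^ 4 + 8 * τ ^ 3 + 9 * τ ^ 2 + 4 * τ + 1) /
          (4 * n ^ 2 * τ ^ 2 * (τ + 1) ^ 2) := by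
  have hconj (Y : ℚ) : Semiconj (C * ·) (fun u => C * u ^ 2 + D * Y ^ 2)
      (fun v => v ^ 2 + C * D * Y ^ 2) := fun u => by ring
  rw [exists_comm]
  simp_rw [(hconj _).exists_iterate_eq_self_and_ne_iff (mulLeft_bijective₀ C hC),
    exists_iterate_three_sq_add_iff, ← sub_ne_zero (b := (-1 : ℚ)), sub_neg_eq_add]
  constructor
  · rintro ⟨Y, τ, hτ, hτ₁, hk⟩
    have hY : Y ≠ 0 := by
      rintro rfl
      exact (waldeRussoPoly_pos τ).ne' (by simpa using hk.symm)
    refine ⟨τ, Y, hτ₁, hτ, hY, ?_⟩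
    rw [eq_div_iff (by positivity)]
    unfold waldeRussoPoly at hk
    linear_combination hk
  · rintro ⟨τ, n, hτ₁, hτ, hn, h⟩
    refine ⟨n, τ, hτ, hτ₁, ?_⟩
    rw [h, waldeRussoPoly]
    field_simp

/-- `f = Cx² + Dy²` has a rational periodic vector of type `(L,L,L)` (i.e. there is a pair
`(x,Y)` with `x` of exact period 3 for `u ↦ Cu² + DY²`) if and only if
`CD = −(τ⁶+2τ⁵+4τ⁴+8τ³+9τ²+4τ+1)/(4n²τ²(τ+1)²)` for some rationals `τ ∉ {−1,0}`, `n ≠ 0`. -/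
theorem type_LLL_criterion (C D : ℚ) (hC : C ≠ 0) (hD : D ≠ 0) :
    (∃ x Y : ℚ,
        (fun u : ℚ => C * u ^ 2 + D * Y ^ 2)^[3] x = x ∧
        (fun u : ℚ => C * u ^ 2 + D * Y ^ 2) x ≠ x) ↔
      ∃ τ n : ℚ, τ ≠ -1 ∧ τ ≠ 0 ∧ n ≠ 0 ∧
        C * D = -(τ ^ 6 + 2 * τ ^ 5 + 4 * τ ^ 4 + 8 * τ ^ 3 + 9 * τ ^ 2 + 4 * τ + 1) /
          (4 * n ^ 2 * τ ^ 2 * (τ + 1) ^ 2) :=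
  type_LLL_criterion_general C D hC
end

section
/- Let f(x,y) = Cx² + Dy² with C, D nonzero rationals, and consider the univariate type t = (L,...,L,R,...,R) with N' left-replacements followed by N − N' right-replacements, where 1 ≤ N' < N. Then there are no periodic vectors of type t for f: any v ∈ ℚ² with f_t(v) = v already satisfies f_s(v) = v for the subtype s = (L,...,L) of length N'. -/
inductive LR | L | R

/-- One replacement step: `L` replaces the left entry with `f v`, `R` the right entry. -/
def step (f : ℚ × ℚ → ℚ) : LR → ℚ × ℚ → ℚ × ℚ
  | .L, p => (f p, p.2)
  | .R, p => (p.1, f p)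

/-- The iterating function `f_t` for a binary type `t`. -/
def iterLR (f : ℚ × ℚ → ℚ) : List LR → ℚ × ℚ → ℚ × ℚ
  | [], p => p
  | a :: t, p => iterLR f t (step f a p)


lemma iterLR_append (f : ℚ × ℚ → ℚ) (s t : List LR) (p : ℚ × ℚ) :
    iterLR f (s ++ t) p = iterLR f t (iterLR f s p) := by
  induction s generalizing p with
  | nil => rfl
  | cons a s ih => simp [iterLR, ih]

lemma iterLR_repL_snd (f : ℚ × ℚ → ℚ) (n : ℕ) (p : ℚ × ℚ) :
    (iterLR f (List.replicate n LR.L) p).2 = p.2 := by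
  induction n generalizing p with
  | zero => rfl
  | succ n ih => simp [List.replicate_succ, iterLR, ih, step]

lemma iterLR_repR_fst (f : ℚ × ℚ → ℚ) (n : ℕ) (p : ℚ × ℚ) :
    (iterLR f (List.replicate n LR.R) p).1 = p.1 := by
  induction n generalizing p with
  | zero => rfl
  | succ n ih => simp [List.replicate_succ, iterLR, ih, step]

/-- For `f = Cx² + Dy²` and the univariate type `t` of `N'` L's followed by `N − N'` R's
with `1 ≤ N' < N`, any `v` fixed by `f_t` is already fixed by the subtype of `N'` L's,
so there are no periodic vectors of type `t`. -/
theorem univariate_type_no_periodic (C D : ℚ) (hC : C ≠ 0) (hD : D ≠ 0)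
    (N' N : ℕ) (h1 : 1 ≤ N') (h2 : N' < N) (v : ℚ × ℚ)
    (hv : iterLR (fun p => C * p.1 ^ 2 + D * p.2 ^ 2)
      (List.replicate N' LR.L ++ List.replicate (N - N') LR.R) v = v) :
    iterLR (fun p => C * p.1 ^ 2 + D * p.2 ^ 2) (List.replicate N' LR.L) v = v := by
  set f : ℚ × ℚ → ℚ := fun p => C * p.1 ^ 2 + D * p.2 ^ 2 with hf
  rw [iterLR_append] at hv
  set w := iterLR f (List.replicate N' LR.L) v with hw
  have h2' : w.2 = v.2 := iterLR_repL_snd f N' v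
  have h1' : w.1 = v.1 := by
    conv_rhs => rw [← hv]
    exact (iterLR_repR_fst f (N - N') w).symm
  exact Prod.ext h1' h2'
end

section
/- The polynomial B₂(c,d) = −d⁴ + 10cd³ − 24c²d² − 2c³d + c⁴ has no rational zeros (C,D) with C, D both nonzero. Consequently, no specialization of the depressed quartic associated to R(y) is biquadratic. -/
lemma rat_sq_ne_prime (p : ℕ) (hp : p.Prime) (q : ℚ) : q ^ 2 ≠ (p : ℚ) := by
  intro hq
  apply hp.irrational_sqrt
  refine ⟨|q|, ?_⟩
  have : ((q : ℝ)) ^ 2 = (p : ℝ) := by exact_mod_cast hq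
  rw [Rat.cast_abs, ← Real.sqrt_sq_eq_abs, this]

/-- The polynomial `B₂(c,d) = −d⁴ + 10cd³ − 24c²d² − 2c³d + c⁴` has no rational zeros
with both coordinates nonzero. -/
theorem B2_no_rational_zeros (C D : ℚ) (hC : C ≠ 0) (hD : D ≠ 0) :
    -D ^ 4 + 10 * C * D ^ 3 - 24 * C ^ 2 * D ^ 2 - 2 * C ^ 3 * D + C ^ 4 ≠ 0 := by
  intro h
  have hfac : (C ^ 2 - 6 * C * D + D ^ 2) * (C ^ 2 + 4 * C * D - D ^ 2) = 0 := by
    linear_combination h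
  rcases mul_eq_zero.mp hfac with h1 | h2
  · have := rat_sq_ne_prime 2 (by norm_num) ((C - 3 * D) / (2 * D))
    apply this
    field_simp
    linear_combination h1
  · have := rat_sq_ne_prime 5 (by norm_num) ((C + 2 * D) / D)
    apply this
    field_simp
    linear_combination h2
end

section
/- The homogeneous degree-12 polynomial E(c,d) = −25d¹² + 405cd¹¹ − 4752c²d¹⁰ + 37104c³d⁹ − 172194c⁴d⁸ + 438210c⁵d⁷ − 517584c⁶d⁶ + 114504c⁷d⁵ + 51027c⁸d⁴ − 10879c⁹d³ − 1608c¹⁰d² + 240c¹¹d + 16c¹² has no zeros (C,D) ∈ ℚ² with (C,D) ≠ (0,0); indeed it has no nontrivial zeros over ℚ₃. -/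
private lemma zmod3_check : ∀ a b : ZMod 3, a ≠ 0 ∨ b ≠ 0 →
    -25 * b ^ 12 + 405 * a * b ^ 11 - 4752 * a ^ 2 * b ^ 10 + 37104 * a ^ 3 * b ^ 9
      - 172194 * a ^ 4 * b ^ 8 + 438210 * a ^ 5 * b ^ 7 - 517584 * a ^ 6 * b ^ 6
      + 114504 * a ^ 7 * b ^ 5 + 51027 * a ^ 8 * b ^ 4 - 10879 * a ^ 9 * b ^ 3
      - 1608 * a ^ 10 * b ^ 2 + 240 * a ^ 11 * b + 16 * a ^ 12 ≠ 0 := by decide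

private lemma padicInt_check (x y : ℤ_[3]) (h : IsUnit x ∨ IsUnit y) :
    -25 * y ^ 12 + 405 * x * y ^ 11 - 4752 * x ^ 2 * y ^ 10 + 37104 * x ^ 3 * y ^ 9
      - 172194 * x ^ 4 * y ^ 8 + 438210 * x ^ 5 * y ^ 7 - 517584 * x ^ 6 * y ^ 6
      + 114504 * x ^ 7 * y ^ 5 + 51027 * x ^ 8 * y ^ 4 - 10879 * x ^ 9 * y ^ 3
      - 1608 * x ^ 10 * y ^ 2 + 240 * x ^ 11 * y + 16 * x ^ 12 ≠ 0 := by
  intro h0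
  have h1 := congrArg (PadicInt.toZMod (p := 3)) h0
  simp only [map_add, map_sub, map_mul, map_pow, map_neg, map_ofNat, map_zero] at h1
  refine zmod3_check (PadicInt.toZMod x) (PadicInt.toZMod y) ?_ h1
  rcases h with h | h
  · exact Or.inl (h.map (PadicInt.toZMod (p := 3))).ne_zero
  · exact Or.inr (h.map (PadicInt.toZMod (p := 3))).ne_zero

private lemma padic_check (C D : ℚ_[3]) (h : (C, D) ≠ (0, 0)) :
    -25 * D ^ 12 + 405 * C * D ^ 11 - 4752 * C ^ 2 * D ^ 10 + 37104 * C ^ 3 * D ^ 9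
      - 172194 * C ^ 4 * D ^ 8 + 438210 * C ^ 5 * D ^ 7 - 517584 * C ^ 6 * D ^ 6
      + 114504 * C ^ 7 * D ^ 5 + 51027 * C ^ 8 * D ^ 4 - 10879 * C ^ 9 * D ^ 3
      - 1608 * C ^ 10 * D ^ 2 + 240 * C ^ 11 * D + 16 * C ^ 12 ≠ 0 := by
  intro h0
  rcases le_total ‖C‖ ‖D‖ with hle | hle
  · have hD : D ≠ 0 := by
      rintro rfl
      simp only [norm_zero] at hle
      exact h (by simp [norm_le_zero_iff.mp hle])
    have hle1 : ‖C / D‖ ≤ 1 := by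
      rw [norm_div]
      exact div_le_one_of_le₀ hle (norm_nonneg _)
    set x : ℤ_[3] := ⟨C / D, hle1⟩ with hx
    set t : ℚ_[3] := C / D with htdef
    have hC : C = t * D := (div_mul_cancel₀ C hD).symm
    have hcoe : PadicInt.Coe.ringHom (p := 3) x = t := rfl
    have hone : PadicInt.Coe.ringHom (p := 3) 1 = 1 := map_one _
    have key : PadicInt.Coe.ringHom (p := 3)
        (-25 * 1 ^ 12 + 405 * x * 1 ^ 11 - 4752 * x ^ 2 * 1 ^ 10 + 37104 * x ^ 3 * 1 ^ 9
          - 172194 * x ^ 4 * 1 ^ 8 + 438210 * x ^ 5 * 1 ^ 7 - 517584 * x ^ 6 * 1 ^ 6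
          + 114504 * x ^ 7 * 1 ^ 5 + 51027 * x ^ 8 * 1 ^ 4 - 10879 * x ^ 9 * 1 ^ 3
          - 1608 * x ^ 10 * 1 ^ 2 + 240 * x ^ 11 * 1 + 16 * x ^ 12) =
        PadicInt.Coe.ringHom (p := 3) 0 := by
      rw [map_zero]
      simp only [map_add, map_sub, map_mul, map_pow, map_neg, map_ofNat, hcoe, hone]
      rw [hC] at h0
      apply mul_left_cancel₀ (pow_ne_zero 12 hD)
      linear_combination h0
    exact padicInt_check x 1 (Or.inr isUnit_one) ((PadicInt.subring 3).subtype_injective key)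
  · have hC : C ≠ 0 := by
      rintro rfl
      simp only [norm_zero] at hle
      exact h (by simp [norm_le_zero_iff.mp hle])
    have hle1 : ‖D / C‖ ≤ 1 := by
      rw [norm_div]
      exact div_le_one_of_le₀ hle (norm_nonneg _)
    set y : ℤ_[3] := ⟨D / C, hle1⟩ with hy
    set t : ℚ_[3] := D / C with htdef
    have hD : D = t * C := (div_mul_cancel₀ D hC).symm
    have hcoe : PadicInt.Coe.ringHom (p := 3) y = t := rfl
    have hone : PadicInt.Coe.ringHom (p := 3) 1 = 1 := map_one _
    have key : PadicInt.Coe.ringHom (p := 3)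
        (-25 * y ^ 12 + 405 * 1 * y ^ 11 - 4752 * 1 ^ 2 * y ^ 10 + 37104 * 1 ^ 3 * y ^ 9
          - 172194 * 1 ^ 4 * y ^ 8 + 438210 * 1 ^ 5 * y ^ 7 - 517584 * 1 ^ 6 * y ^ 6
          + 114504 * 1 ^ 7 * y ^ 5 + 51027 * 1 ^ 8 * y ^ 4 - 10879 * 1 ^ 9 * y ^ 3
          - 1608 * 1 ^ 10 * y ^ 2 + 240 * 1 ^ 11 * y + 16 * 1 ^ 12) =
        PadicInt.Coe.ringHom (p := 3) 0 := by
      rw [map_zero]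
      simp only [map_add, map_sub, map_mul, map_pow, map_neg, map_ofNat, hcoe, hone]
      rw [hD] at h0
      apply mul_left_cancel₀ (pow_ne_zero 12 hC)
      linear_combination h0
    exact padicInt_check 1 y (Or.inl isUnit_one) ((PadicInt.subring 3).subtype_injective key)

/-- The homogeneous degree-12 polynomial `E(c,d)` has no nontrivial zeros over `ℚ`,
and indeed none over `ℚ₃`. -/
theorem E_no_nontrivial_zeros :
    (∀ C D : ℚ, (C, D) ≠ (0, 0) →
      -25 * D ^ 12 + 405 * C * D ^ 11 - 4752 * C ^ 2 * D ^ 10 + 37104 * C ^ 3 * D ^ 9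
        - 172194 * C ^ 4 * D ^ 8 + 438210 * C ^ 5 * D ^ 7 - 517584 * C ^ 6 * D ^ 6
        + 114504 * C ^ 7 * D ^ 5 + 51027 * C ^ 8 * D ^ 4 - 10879 * C ^ 9 * D ^ 3
        - 1608 * C ^ 10 * D ^ 2 + 240 * C ^ 11 * D + 16 * C ^ 12 ≠ 0) ∧
    (∀ C D : ℚ_[3], (C, D) ≠ (0, 0) →
      -25 * D ^ 12 + 405 * C * D ^ 11 - 4752 * C ^ 2 * D ^ 10 + 37104 * C ^ 3 * D ^ 9
        - 172194 * C ^ 4 * D ^ 8 + 438210 * C ^ 5 * D ^ 7 - 517584 * C ^ 6 * D ^ 6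
        + 114504 * C ^ 7 * D ^ 5 + 51027 * C ^ 8 * D ^ 4 - 10879 * C ^ 9 * D ^ 3
        - 1608 * C ^ 10 * D ^ 2 + 240 * C ^ 11 * D + 16 * C ^ 12 ≠ 0) := by
  refine ⟨?_, padic_check⟩
  intro C D h hE
  have hcast : ((C : ℚ_[3]), (D : ℚ_[3])) ≠ (0, 0) := by
    intro hc
    apply h
    have h1 : (C : ℚ_[3]) = 0 := congrArg Prod.fst hc
    have h2 : (D : ℚ_[3]) = 0 := congrArg Prod.snd hc
    have hC0 : C = 0 := by exact_mod_cast h1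
    have hD0 : D = 0 := by exact_mod_cast h2
    simp [hC0, hD0]
  apply padic_check (C : ℚ_[3]) (D : ℚ_[3]) hcast
  have := congrArg (fun q : ℚ => (q : ℚ_[3])) hE
  push_cast at this
  linear_combination this
end
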